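/- arXiv:1907.03527 — 3 statements merged into one kernel-verified Lean document; each statement's English description precedes it below -/
import Mathlib

section
/- Let T > 0, ω ∈ ℝ, x ∈ ℝ, and suppose ω·cos(ωT)·sin(xT) - x·sin(ωT)·cos(xT) = 0 and -ω·sin(ωT)·sin(xT) - x·cos(ωT)·cos(xT) + x = 0, with cos(xT) ≠ 0, cos(ωT) ≠ 0, and x ≠ 0. Then cos(xT) = cos(ωT). -/
theorem stmt4 (T ω x : ℝ) (hT : T > 0)
    (h1 : ω * Real.cos (ω * T) * Real.sin (x * T) - x * Real.sin (ω * T) * Real.cos (x * T) = 0)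
    (h2 : -ω * Real.sin (ω * T) * Real.sin (x * T) - x * Real.cos (ω * T) * Real.cos (x * T) + x = 0)
    (hx1 : Real.cos (x * T) ≠ 0) (hx2 : Real.cos (ω * T) ≠ 0) (hx : x ≠ 0) :
    Real.cos (x * T) = Real.cos (ω * T) := by
  have h3 : x * (Real.cos (x * T) - Real.cos (ω * T)) = 0 := by
    linear_combination -(Real.sin (ω * T) * h1) - Real.cos (ω * T) * h2 -
      x * Real.cos (x * T) * (Real.sin_sq_add_cos_sq (ω * T))
  rcases mul_eq_zero.mp h3 with h | h
  · exact absurd h hx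
  · linarith
end

section
/- Let T > 0 and ω ∈ ℝ with e^{2iωT} ≠ 1. Define for θ > 0, θ ≠ ω, h(θ) = Re( e^{iωT} cos(θT) + e^{iωT-iθT}·ω/(θ-ω) - θ/(θ-ω) ). Then limsup_{θ→∞} h(θ) ≤ |cos(ωT)| - 1 < 0; in particular there exist N > 0 and ε > 0 such that h(θ) ≤ -ε for all θ ≥ N. -/
/-!
Since `θ / (θ - ω) = 1 + ω / (θ - ω)`, the function is
`h θ = cos (ωT) cos (θT) - 1 + (cos ((ω - θ)T) - 1) · ω / (θ - ω)`, and the last term is a bounded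
factor times `ω / (θ - ω) → 0`. So for large `θ`, `h θ` is at most `|cos (ωT)| - 1` up to a vanishing
error, and `|cos (ωT)| < 1` because `|cos (ωT)| = 1` would force `e^{2iωT} = 1`.
-/

open Filter Topology

section LimsupOfVanishingError

variable {α : Type*} {l : Filter α} {f r : α → ℝ} {a : ℝ}

theorem eventually_le_add_of_le_add_tendsto_zero (hr : Tendsto r l (𝓝 0))
    (hf : ∀ᶠ x in l, f x ≤ a + r x) {δ : ℝ} (hδ : 0 < δ) : ∀ᶠ x in l, f x ≤ a + δ := by
  filter_upwards [hf, hr.eventually (gt_mem_nhds hδ)] with x hfx hrx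
  linarith

theorem limsup_le_of_le_add_tendsto_zero [l.NeBot] (hr : Tendsto r l (𝓝 0)) {b : ℝ}
    (hlow : ∀ᶠ x in l, b ≤ f x) (hf : ∀ᶠ x in l, f x ≤ a + r x) : limsup f l ≤ a :=
  le_of_forall_pos_le_add fun _ hδ =>
    limsup_le_of_le (isCoboundedUnder_le_of_eventually_le l hlow)
      (eventually_le_add_of_le_add_tendsto_zero hr hf hδ)

end LimsupOfVanishingError

theorem Real.abs_cos_lt_one_of_cexp_ne_one {x : ℝ} (h : Complex.exp (2 * Complex.I * x) ≠ 1) :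
    |Real.cos x| < 1 := by
  refine lt_of_le_of_ne (Real.abs_cos_le_one x) fun h1 => h ?_
  have hcos : Real.cos x ^ 2 = 1 := by rw [← sq_abs, h1, one_pow]
  have hsin : Real.sin x = 0 := by
    nlinarith [Real.sin_sq_add_cos_sq x, sq_nonneg (Real.sin x)]
  rw [show 2 * Complex.I * x = ((2 * x : ℝ) : ℂ) * Complex.I by push_cast; ring, Complex.exp_mul_I,
    ← Complex.ofReal_cos, ← Complex.ofReal_sin, Real.cos_two_mul, Real.sin_two_mul, hcos, hsin]
  norm_num

theorem re_cexp_mul_cos_add_sub_div_eq {T ω θ : ℝ} (hθω : θ ≠ ω) :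
    (Complex.exp (Complex.I * ω * T) * Real.cos (θ * T) +
        Complex.exp (Complex.I * ω * T - Complex.I * θ * T) * (ω / (θ - ω)) -
        (θ / (θ - ω))).re =
      Real.cos (ω * T) * Real.cos (θ * T) - 1 +
        (Real.cos ((ω - θ) * T) - 1) * (ω / (θ - ω)) := by
  have hne : (θ : ℂ) - ω ≠ 0 := sub_ne_zero.mpr (mod_cast hθω)
  rw [show Complex.I * ω * T - Complex.I * θ * T = (((ω - θ) * T : ℝ) : ℂ) * Complex.I by
      push_cast; ring,
    show Complex.I * ω * T = ((ω * T : ℝ) : ℂ) * Complex.I by push_cast; ring,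
    show (ω / (θ - ω) : ℂ) = ((ω / (θ - ω) : ℝ) : ℂ) by push_cast; rfl,
    show (θ / (θ - ω) : ℂ) = ((1 + ω / (θ - ω) : ℝ) : ℂ) by push_cast; field_simp; ring]
  simp only [Complex.add_re, Complex.sub_re, Complex.mul_re, Complex.ofReal_re,
    Complex.ofReal_im, Complex.exp_ofReal_mul_I_re, mul_zero, sub_zero]
  ring

theorem tendsto_cos_sub_one_mul_div_sub_atTop (T ω : ℝ) :
    Tendsto (fun θ : ℝ => (Real.cos ((ω - θ) * T) - 1) * (ω / (θ - ω))) atTop (𝓝 0) := by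
  have hbdd : IsBoundedUnder (· ≤ ·) atTop (norm ∘ fun θ : ℝ => Real.cos ((ω - θ) * T) - 1) :=
    isBoundedUnder_of ⟨2, fun θ => by
      simp only [Function.comp_apply, Real.norm_eq_abs]
      exact abs_le.mpr ⟨by linarith [Real.neg_one_le_cos ((ω - θ) * T)],
        by linarith [Real.cos_le_one ((ω - θ) * T)]⟩⟩
  exact isBoundedUnder_le_mul_tendsto_zero hbdd
    (tendsto_const_nhds.div_atTop (tendsto_atTop_add_const_right _ _ tendsto_id))

theorem stmt13_general (T : ℝ) (ω : ℝ)
    (hωT : Complex.exp (2 * Complex.I * ω * T) ≠ 1)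
    (h : ℝ → ℝ)
    (hh : ∀ θ : ℝ, θ > 0 → θ ≠ ω →
      h θ = (Complex.exp (Complex.I * ω * T) * Real.cos (θ * T) +
          Complex.exp (Complex.I * ω * T - Complex.I * θ * T) * (ω / (θ - ω)) -
          (θ / (θ - ω))).re) :
    limsup h atTop ≤ |Real.cos (ω * T)| - 1 ∧
      |Real.cos (ω * T)| - 1 < 0 ∧
      ∃ N ε : ℝ, N > 0 ∧ ε > 0 ∧ ∀ θ : ℝ, θ ≥ N → h θ ≤ -ε := by
  set c := |Real.cos (ω * T)|
  have hc : c < 1 := Real.abs_cos_lt_one_of_cexp_ne_one (by simpa [mul_assoc] using hωT)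
  set r := fun θ : ℝ => (Real.cos ((ω - θ) * T) - 1) * (ω / (θ - ω))
  have hr : Tendsto r atTop (𝓝 0) := tendsto_cos_sub_one_mul_div_sub_atTop T ω
  have hform : ∀ᶠ θ in atTop, h θ = Real.cos (ω * T) * Real.cos (θ * T) - 1 + r θ := by
    filter_upwards [eventually_gt_atTop (max 0 ω)] with θ hθ
    rw [max_lt_iff] at hθ
    exact (hh θ hθ.1 hθ.2.ne').trans (re_cexp_mul_cos_add_sub_div_eq hθ.2.ne')
  have hprod : ∀ θ, |Real.cos (ω * T) * Real.cos (θ * T)| ≤ c := fun θ => by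
    rw [abs_mul]
    exact mul_le_of_le_one_right (abs_nonneg _) (Real.abs_cos_le_one _)
  have hup : ∀ᶠ θ in atTop, h θ ≤ c - 1 + r θ := hform.mono fun θ hθ => by
    linarith [le_abs_self (Real.cos (ω * T) * Real.cos (θ * T)), hprod θ]
  have hlow : ∀ᶠ θ in atTop, -h θ ≤ 2 + -r θ := hform.mono fun θ hθ => by
    linarith [neg_abs_le (Real.cos (ω * T) * Real.cos (θ * T)), hprod θ]
  have hbelow : ∀ᶠ θ in atTop, -3 ≤ h θ :=
    (eventually_le_add_of_le_add_tendsto_zero (by simpa using hr.neg) hlow one_pos).mono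
      fun θ hθ => by linarith
  obtain ⟨N, hN⟩ := eventually_atTop.mp
    (eventually_le_add_of_le_add_tendsto_zero hr hup (by linarith : 0 < (1 - c) / 2))
  refine ⟨limsup_le_of_le_add_tendsto_zero hr hbelow hup, by linarith,
    max N 1, (1 - c) / 2, by positivity, by linarith, fun θ hθ => ?_⟩
  linarith [hN θ (le_of_max_le_left hθ)]

theorem stmt13 (T : ℝ) (hT : T > 0) (ω : ℝ)
    (hωT : Complex.exp (2 * Complex.I * ω * T) ≠ 1)
    (h : ℝ → ℝ)
    (hh : ∀ θ : ℝ, θ > 0 → θ ≠ ω →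
      h θ = (Complex.exp (Complex.I * ω * T) * Real.cos (θ * T) +
          Complex.exp (Complex.I * ω * T - Complex.I * θ * T) * (ω / (θ - ω)) -
          (θ / (θ - ω))).re) :
    limsup h atTop ≤ |Real.cos (ω * T)| - 1 ∧
      |Real.cos (ω * T)| - 1 < 0 ∧
      ∃ N ε : ℝ, N > 0 ∧ ε > 0 ∧ ∀ θ : ℝ, θ ≥ N → h θ ≤ -ε :=
  stmt13_general T ω hωT h hh
end

section
/- Let T > 0 and ω ∈ ℝ with e^{2iωT} ≠ 1, and let (θ_k) be a sequence of positive reals with θ_k → ∞ and all θ_k distinct from ±ω and with e^{iθ_kT} ∉ {e^{iωT}, e^{-iωT}}. Define d_k = (1/(iω+iθ_k))(e^{iωT+iθ_kT}-1) - (1/(iω-iθ_k))(e^{iωT-iθ_kT}-1). Then inf_k |d_k|(1+θ_k) > 0. -/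
/-!
Write `z = e^{iωT}` and `w = e^{iθT}`, both on the unit circle, so that `d = -i D` with
`D = (zw - 1)/(ω + θ) - (z/w - 1)/(ω - θ)`. If `D = 0`, the relation
`(ω - θ) w (zw - 1) = (ω + θ)(z - w)` and its complex conjugate (where `conj = inv` on the
circle) force `w² = 1`, and then `z² = 1`. For large `θ`, `(1 + θ) D = z (w + w⁻¹) - 2 + O(1/θ)`;
since `w + w⁻¹` is real, the main term is at distance at least `2 |Im z| > 0` from `0`.
A positive sequence that is eventually bounded below by a positive constant has a positive
infimum.
-/

open Filter Topology ComplexConjugate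

namespace Complex

lemma im_ne_zero_of_norm_eq_one_of_sq_ne_one {z : ℂ} (hz : ‖z‖ = 1) (hz2 : z ^ 2 ≠ 1) :
    z.im ≠ 0 := by
  intro him
  apply hz2
  have hz0 : z ≠ 0 := by rintro rfl; simp at hz
  have hinv : z⁻¹ = z := (inv_eq_conj hz).trans (conj_eq_iff_im.mpr him)
  rw [sq]
  nth_rewrite 2 [← hinv]
  exact mul_inv_cancel₀ hz0

lemma mul_mul_sub_one_ne_mul_sub_of_norm_eq_one {z w : ℂ} (hz : ‖z‖ = 1) (hw : ‖w‖ = 1)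
    (hz2 : z ^ 2 ≠ 1) (hwz : w ≠ z) {a b : ℝ} (ha : a ≠ 0) (hab : a ≠ b) :
    (b : ℂ) * w * (z * w - 1) ≠ a * (z - w) := by
  intro E
  have hz0 : z ≠ 0 := by rintro rfl; simp at hz
  have hw0 : w ≠ 0 := by rintro rfl; simp at hw
  have E' := congrArg conj E
  simp only [map_mul, map_sub, map_one, conj_ofReal, ← inv_eq_conj hz, ← inv_eq_conj hw] at E'
  field_simp at E'
  have hab' : (a : ℂ) - b ≠ 0 := sub_ne_zero.mpr (mod_cast hab)
  have hw2 : (a : ℂ) * (z - w) * ((1 - w) * (1 + w)) = 0 := by linear_combination -(E + w * E')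
  rcases mul_eq_zero.mp hw2 with h | h
  · rcases mul_eq_zero.mp h with h | h
    · exact ha (mod_cast h)
    · exact hwz (sub_eq_zero.mp h).symm
  · rcases mul_eq_zero.mp h with h | h
    · obtain rfl : w = 1 := (sub_eq_zero.mp h).symm
      have : ((a : ℂ) - b) * (z - 1) = 0 := by linear_combination -E
      apply hz2
      rw [sub_eq_zero.mp ((mul_eq_zero.mp this).resolve_left hab'), one_pow]
    · obtain rfl : w = -1 := eq_neg_of_add_eq_zero_right h
      have : ((a : ℂ) - b) * (z + 1) = 0 := by linear_combination -E
      apply hz2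
      rw [eq_neg_of_add_eq_zero_left ((mul_eq_zero.mp this).resolve_left hab')]
      norm_num

lemma two_mul_abs_im_le_norm_mul_ofReal_sub_two {z : ℂ} (hz : ‖z‖ = 1) (r : ℝ) :
    2 * |z.im| ≤ ‖z * r - 2‖ := by
  have hz0 : z ≠ 0 := by rintro rfl; simp at hz
  have hzz : conj z * z = 1 := by rw [← inv_eq_conj hz, inv_mul_cancel₀ hz0]
  calc 2 * |z.im| = |((r : ℂ) - 2 * conj z).im| := by simp [abs_mul]
    _ ≤ ‖(r : ℂ) - 2 * conj z‖ := abs_im_le_norm _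
    _ = ‖conj z * (z * r - 2)‖ := by
        congr 1; linear_combination (r : ℂ) * hzz.symm
    _ = ‖z * r - 2‖ := by rw [norm_mul, norm_conj, hz, one_mul]

end Complex

open Complex

/-- With `z = e^{iωT}` and `w = e^{iθT}`, the paper's `d` is `-i` times this. -/
noncomputable def modalDenominator (ω θ : ℝ) (z w : ℂ) : ℂ :=
  (z * w - 1) / (ω + θ) - (z / w - 1) / (ω - θ)

section ModalDenominator

variable {ω θ : ℝ} {z w : ℂ}

lemma modalDenominator_ne_zero (hz : ‖z‖ = 1) (hw : ‖w‖ = 1) (hz2 : z ^ 2 ≠ 1) (hwz : w ≠ z)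
    (hθ : θ ≠ 0) (hplus : ω + θ ≠ 0) (hminus : ω - θ ≠ 0) :
    modalDenominator ω θ z w ≠ 0 := by
  have hw0 : w ≠ 0 := by rintro rfl; simp at hw
  have hplus' : (ω : ℂ) + θ ≠ 0 := mod_cast hplus
  have hminus' : (ω : ℂ) - θ ≠ 0 := mod_cast hminus
  intro h
  refine mul_mul_sub_one_ne_mul_sub_of_norm_eq_one hz hw hz2 hwz hplus (a := ω + θ) (b := ω - θ)
    (by intro h'; apply hθ; linarith) ?_
  rw [modalDenominator, sub_eq_zero, div_eq_div_iff hplus' hminus'] at h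
  field_simp at h
  push_cast
  linear_combination h

lemma one_add_mul_modalDenominator (hplus : ω + θ ≠ 0) (hminus : ω - θ ≠ 0) :
    (1 + θ) * modalDenominator ω θ z w =
      (z * (w + w⁻¹) - 2) + (z * w - 1) * ((1 - ω) / (θ + ω))
        + (z / w - 1) * ((1 + ω) / (θ + -ω)) := by
  have hplus' : (ω : ℂ) + θ ≠ 0 := mod_cast hplus
  have hminus' : (ω : ℂ) - θ ≠ 0 := mod_cast hminus
  have hplus_split : (1 + θ : ℂ) / (ω + θ) = 1 + (1 - ω) / (θ + ω) := by
    rw [add_comm (θ : ℂ)]; field_simp; ring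
  have hminus_split : -(1 + θ : ℂ) / (ω - θ) = 1 + (1 + ω) / (θ + -ω) := by
    have hminus'' : (θ : ℂ) + -ω ≠ 0 := by
      rw [← sub_eq_add_neg, ← neg_sub]; exact neg_ne_zero.mpr hminus'
    field_simp; ring
  rw [modalDenominator]
  linear_combination (z * w - 1) * hplus_split + (z / w - 1) * hminus_split

end ModalDenominator

lemma tendsto_mul_div_add_atTop {ι : Type*} {l : Filter ι} {u : ι → ℂ} {M : ℝ}
    (hu : ∀ i, ‖u i‖ ≤ M) {θ : ι → ℝ} (hθ : Tendsto θ l atTop) (c a : ℝ) :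
    Tendsto (fun i => u i * (c / (θ i + a))) l (𝓝 0) := by
  have hreal : Tendsto (fun i => c / (θ i + a)) l (𝓝 0) :=
    tendsto_const_nhds.div_atTop (tendsto_atTop_add_const_right _ a hθ)
  have hcomplex : Tendsto (fun i => (c / (θ i + a) : ℂ)) l (𝓝 0) := by
    simpa using hreal.ofReal
  simp only [mul_comm (u _)]
  exact hcomplex.zero_mul_isBoundedUnder_le (isBoundedUnder_of ⟨M, hu⟩)

lemma eventually_abs_im_le_norm_one_add_mul_modalDenominator {ι : Type*} {l : Filter ι}
    {ω : ℝ} {z : ℂ} (hz : ‖z‖ = 1) (him : z.im ≠ 0) {θ : ι → ℝ} (hθ : Tendsto θ l atTop)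
    {w : ι → ℂ} (hw : ∀ i, ‖w i‖ = 1) :
    ∀ᶠ i in l, |z.im| ≤ ‖(1 + θ i) * modalDenominator ω (θ i) z (w i)‖ := by
  have hplus_le : ∀ i, ‖z * w i - 1‖ ≤ 2 := fun i =>
    (norm_sub_le _ _).trans (by norm_num [hz, hw])
  have hminus_le : ∀ i, ‖z / w i - 1‖ ≤ 2 := fun i =>
    (norm_sub_le _ _).trans (by norm_num [hz, hw])
  set err := fun i => (z * w i - 1) * ((1 - ω) / (θ i + ω))
    + (z / w i - 1) * ((1 + ω) / (θ i + -ω))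
  have herr : Tendsto err l (𝓝 0) := by
    simpa using (tendsto_mul_div_add_atTop hplus_le hθ (1 - ω) ω).add
      (tendsto_mul_div_add_atTop hminus_le hθ (1 + ω) (-ω))
  have hsmall : ∀ᶠ i in l, ‖err i‖ < |z.im| :=
    herr.norm.eventually (gt_mem_nhds (by simpa using him))
  filter_upwards [hsmall, hθ.eventually_gt_atTop |ω|] with i hi hωi
  have hplus : ω + θ i ≠ 0 := by intro h; linarith [neg_abs_le ω]
  have hminus : ω - θ i ≠ 0 := by intro h; linarith [le_abs_self ω]
  have hmain : 2 * |z.im| ≤ ‖z * (w i + (w i)⁻¹) - 2‖ := by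
    rw [inv_eq_conj (hw i), add_conj]
    exact two_mul_abs_im_le_norm_mul_ofReal_sub_two hz _
  rw [one_add_mul_modalDenominator hplus hminus, add_assoc]
  linarith [norm_sub_le_norm_add (z * (w i + (w i)⁻¹) - 2) (err i)]

lemma exists_lt_forall_le_of_eventually_le {α : Type*} [LinearOrder α] {f : ℕ → α} {a c : α}
    (hf : ∀ k, a < f k) (hc : a < c) (hev : ∀ᶠ k in atTop, c ≤ f k) :
    ∃ δ, a < δ ∧ ∀ k, δ ≤ f k := by
  obtain ⟨N, hN⟩ := eventually_atTop.mp hev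
  refine ⟨min c ((Finset.range (N + 1)).inf' Finset.nonempty_range_add_one f),
    lt_min hc ((Finset.lt_inf'_iff _).mpr fun k _ => hf k), fun k => ?_⟩
  rcases le_or_gt N k with hk | hk
  · exact (min_le_left _ _).trans (hN k hk)
  · exact (min_le_right _ _).trans (Finset.inf'_le f (Finset.mem_range.mpr (by omega)))

theorem stmt14_general (T : ℝ) (ω : ℝ)
    (hωT : Complex.exp (2 * Complex.I * ω * T) ≠ 1)
    (θ : ℕ → ℝ)
    (hpos : ∀ k, θ k > 0)
    (htend : Tendsto θ atTop atTop)
    (h1 : ∀ k, θ k ≠ ω) (h2 : ∀ k, θ k ≠ -ω)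
    (h3 : ∀ k, Complex.exp (Complex.I * θ k * T) ≠ Complex.exp (Complex.I * ω * T))
    (d : ℕ → ℂ)
    (hd : ∀ k, d k = (1 / (Complex.I * ω + Complex.I * θ k)) *
          (Complex.exp (Complex.I * ω * T + Complex.I * θ k * T) - 1) -
        (1 / (Complex.I * ω - Complex.I * θ k)) *
          (Complex.exp (Complex.I * ω * T - Complex.I * θ k * T) - 1)) :
    ∃ δ : ℝ, δ > 0 ∧ ∀ k, ‖d k‖ * (1 + θ k) ≥ δ := by
  have hunit : ∀ x : ℝ, ‖exp (I * x * T)‖ = 1 := fun x => by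
    simpa [mul_comm, mul_left_comm] using norm_exp_ofReal_mul_I (x * T)
  set z := exp (I * ω * T)
  set w := fun k => exp (I * θ k * T)
  have hz2 : z ^ 2 ≠ 1 := by
    rwa [← exp_nat_mul, show ((2 : ℕ) : ℂ) * (I * ω * T) = 2 * I * ω * T by push_cast; ring]
  have him : z.im ≠ 0 := im_ne_zero_of_norm_eq_one_of_sq_ne_one (hunit ω) hz2
  have hdk : ∀ k, d k = -I * modalDenominator ω (θ k) z (w k) := fun k => by
    rw [hd k, modalDenominator, exp_add, exp_sub]
    simp only [one_div, ← mul_add, ← mul_sub, mul_inv, inv_I]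
    ring
  have hnorm : ∀ k, ‖d k‖ * (1 + θ k) = ‖(1 + θ k) * modalDenominator ω (θ k) z (w k)‖ :=
    fun k => by
      rw [hdk, norm_mul, norm_mul, norm_neg, norm_I, one_mul, mul_comm,
        show (1 + θ k : ℂ) = ((1 + θ k : ℝ) : ℂ) by push_cast; rfl,
        norm_real, Real.norm_of_nonneg (by linarith [hpos k])]
  refine exists_lt_forall_le_of_eventually_le (fun k => ?_) (abs_pos.mpr him) ?_
  · rw [hnorm]
    refine norm_pos_iff.mpr (mul_ne_zero ?_ (modalDenominator_ne_zero (hunit ω) (hunit _) hz2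
      (h3 k) (hpos k).ne' (fun h => h2 k (by linarith)) (sub_ne_zero.mpr (h1 k).symm)))
    exact_mod_cast (by linarith [hpos k] : 1 + θ k ≠ 0)
  · simpa only [hnorm] using eventually_abs_im_le_norm_one_add_mul_modalDenominator (hunit ω)
      him htend (fun k => hunit (θ k))

theorem stmt14 (T : ℝ) (hT : T > 0) (ω : ℝ)
    (hωT : Complex.exp (2 * Complex.I * ω * T) ≠ 1)
    (θ : ℕ → ℝ)
    (hpos : ∀ k, θ k > 0)
    (htend : Tendsto θ atTop atTop)
    (h1 : ∀ k, θ k ≠ ω) (h2 : ∀ k, θ k ≠ -ω)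
    (h3 : ∀ k, Complex.exp (Complex.I * θ k * T) ≠ Complex.exp (Complex.I * ω * T))
    (h4 : ∀ k, Complex.exp (Complex.I * θ k * T) ≠ Complex.exp (-Complex.I * ω * T))
    (d : ℕ → ℂ)
    (hd : ∀ k, d k = (1 / (Complex.I * ω + Complex.I * θ k)) *
          (Complex.exp (Complex.I * ω * T + Complex.I * θ k * T) - 1) -
        (1 / (Complex.I * ω - Complex.I * θ k)) *
          (Complex.exp (Complex.I * ω * T - Complex.I * θ k * T) - 1)) :
    ∃ δ : ℝ, δ > 0 ∧ ∀ k, ‖d k‖ * (1 + θ k) ≥ δ :=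
  stmt14_general T ω hωT θ hpos htend h1 h2 h3 d hd
end
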